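/- arXiv:1505.06181 — 3 statements merged into one kernel-verified Lean document; each statement's English description precedes it below -/
import Mathlib

section
/- (Absorbing Lemma) Let F be a graph whose vertex set is partitioned as V(F) = S ∪ R with R nonempty. Suppose that (i) every vertex of R has at least 3|R| neighbors in S; (ii) any two vertices u, v ∈ N(R,S) have at least 6|R| common neighbors in S; and (iii) any three vertices u, v, w ∈ N(N(R,S), S) have at least 7|R| common neighbors in S. Then F contains a subgraph isomorphic to the ladder L_{4|R|−1} whose vertex set consists of all of R together with exactly 7|R| − 2 vertices of S. -/
open SimpleGraph
set_option linter.unusedSectionVars false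
set_option linter.unusedVariables false
set_option maxHeartbeats 1000000

/-- The `m`-ladder `L_m`: vertices `a_1,…,a_m` (the `inl`s) and `b_1,…,b_m` (the
`inr`s), with `a_i` adjacent to `b_j` iff `|i − j| ≤ 1`. -/
def ladderGraph (m : ℕ) : SimpleGraph (Fin m ⊕ Fin m) :=
  SimpleGraph.fromRel (fun x y =>
    match x, y with
    | Sum.inl i, Sum.inr j =>
        (i : ℤ) = (j : ℤ) ∨ (i : ℤ) = (j : ℤ) + 1 ∨ (j : ℤ) = (i : ℤ) + 1
    | _, _ => False)

/-- `φ` exhibits a subgraph of `G` isomorphic to the `m`-ladder. -/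
def IsLadderEmb {V : Type} (G : SimpleGraph V) {m : ℕ} (φ : Fin m ⊕ Fin m → V) : Prop :=
  Function.Injective φ ∧ ∀ p q, (ladderGraph m).Adj p q → G.Adj (φ p) (φ q)


section Helpers
variable {V : Type} [Fintype V] [DecidableEq V]

noncomputable def pick (A : Finset V) (d : V) : V :=
  if h : A.Nonempty then h.choose else d

lemma pick_mem {A : Finset V} {d : V} (h : A.Nonempty) : pick A d ∈ A := by
  unfold pick; rw [dif_pos h]; exact h.choose_spec

def genuine (k t : ℕ) : Prop :=
  (4*k-1 ≤ t ∧ t < 2*(4*k-1) ∧ (t-(4*k-1)) % 4 ≠ 2) ∨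
  (2*(4*k-1) ≤ t ∧ t < 3*(4*k-1) ∧ (t-2*(4*k-1)) % 4 ≠ 0) ∨
  (3*(4*k-1) ≤ t ∧ t < 4*(4*k-1) ∧ (t-3*(4*k-1)) % 4 = 2)

instance genuineDec (k t : ℕ) : Decidable (genuine k t) := by
  unfold genuine; infer_instance

def cntF (k t : ℕ) : ℕ :=
  if t ≤ 4*k-1 then 0
  else if t ≤ 2*(4*k-1) then (t-(4*k-1)) - (t-(4*k-1)+1)/4
  else if t ≤ 3*(4*k-1) then (3*k-1) + ((t-2*(4*k-1)) - (t-2*(4*k-1)+3)/4)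
  else if t ≤ 4*(4*k-1) then (6*k-2) + (t-3*(4*k-1)+1)/4
  else 7*k-2

lemma cnt_eq (k : ℕ) (hk : 1 ≤ k) :
    ∀ t, ((Finset.range t).filter (genuine k)).card = cntF k t := by
  intro t
  induction t with
  | zero => simp [cntF]
  | succ t ih =>
      rw [Finset.range_add_one, Finset.filter_insert]
      by_cases hg : genuine k t
      · rw [if_pos hg, Finset.card_insert_of_notMem (by simp), ih]
        unfold genuine at hg
        unfold cntF
        split_ifs <;> omega
      · rw [if_neg hg, ih]
        unfold genuine at hg
        unfold cntF
        split_ifs <;> omega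

def pfn (m i : ℕ) : ℕ :=
  if i % 4 = 1 then i-1 else if i % 4 = 3 then i else if i = m-1 then i-2 else i-1

def qfn (m i : ℕ) : ℕ :=
  if i % 4 = 1 then i else if i % 4 = 3 then i+1 else if i = m-1 then i-1 else i+1

noncomputable def wpad (F : SimpleGraph V) [DecidableRel F.Adj] (S : Finset V) (k : ℕ)
    (d : V) (prev : ℕ → V) (t : ℕ) : V :=
  if (t - 3*(4*k-1)) + 1 < 4*k-1 then prev (2*(4*k-1) + (t - 3*(4*k-1)) + 1)
  else pick ((S.filter (fun s => F.Adj (prev (4*k-1)) s ∧ F.Adj (prev (4*k-1+1)) s)) \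
      {prev (2*(4*k-1) + (t - 3*(4*k-1)) - 1), prev (2*(4*k-1) + (t - 3*(4*k-1)))}) d

noncomputable def poolOf (F : SimpleGraph V) [DecidableRel F.Adj] (S : Finset V) (k : ℕ)
    (rfun : ℕ → V) (d : V) (prev : ℕ → V) (t : ℕ) : Finset V :=
  if t < 4*k-1 then ∅
  else if t < 2*(4*k-1) then
    S.filter (fun s => F.Adj (rfun ((t - (4*k-1) + 1)/4)) s)
  else if t < 3*(4*k-1) then
    S.filter (fun s => F.Adj (prev (4*k-1 + pfn (4*k-1) (t - 2*(4*k-1)))) s ∧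
                       F.Adj (prev (4*k-1 + qfn (4*k-1) (t - 2*(4*k-1)))) s)
  else
    S.filter (fun s => F.Adj (prev (2*(4*k-1) + (t - 3*(4*k-1)) - 1)) s ∧
                       F.Adj (prev (2*(4*k-1) + (t - 3*(4*k-1)))) s ∧
                       F.Adj (wpad F S k d prev t) s)

noncomputable def usedOf (R : Finset V) (k : ℕ) (prev : ℕ → V) (t : ℕ) : Finset V :=
  R ∪ ((Finset.range t).filter (genuine k)).image prev

noncomputable def gl (F : SimpleGraph V) [DecidableRel F.Adj] (S R : Finset V) (k : ℕ)
    (rfun : ℕ → V) (d : V) : ℕ → ℕ → V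
  | 0 => fun _ => d
  | (t+1) => Function.update (gl F S R k rfun d t) t
      (pick (poolOf F S k rfun d (gl F S R k rfun d t) t \ usedOf R k (gl F S R k rfun d t) t) d)

noncomputable def gfun (F : SimpleGraph V) [DecidableRel F.Adj] (S R : Finset V) (k : ℕ)
    (rfun : ℕ → V) (d : V) (t : ℕ) : V :=
  pick (poolOf F S k rfun d (gl F S R k rfun d t) t \ usedOf R k (gl F S R k rfun d t) t) d

variable (F : SimpleGraph V) [DecidableRel F.Adj] (S R : Finset V) (k : ℕ) (rfun : ℕ → V) (d : V)

lemma gl_eq : ∀ t s, s < t → gl F S R k rfun d t s = gfun F S R k rfun d s := by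
  intro t
  induction t with
  | zero => intro s hs; omega
  | succ t ih =>
      intro s hs
      by_cases h : s = t
      · subst h
        show Function.update (gl F S R k rfun d s) s _ s = _
        rw [Function.update_self]
        rfl
      · show Function.update (gl F S R k rfun d t) t _ s = _
        rw [Function.update_of_ne h]
        exact ih s (by omega)

lemma used_gl_eq (t : ℕ) :
    usedOf R k (gl F S R k rfun d t) t = usedOf R k (gfun F S R k rfun d) t := by
  unfold usedOf
  congr 1
  apply Finset.image_congr
  intro s hs
  simp only [Finset.coe_filter, Set.mem_setOf_eq, Finset.mem_range] at hs
  exact gl_eq F S R k rfun d t s hs.1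

lemma wpad_gl_eq (hk : 1 ≤ k) (t : ℕ) (ht : 3*(4*k-1) ≤ t) :
    wpad F S k d (gl F S R k rfun d t) t = wpad F S k d (gfun F S R k rfun d) t := by
  unfold wpad
  split_ifs with h
  · rw [gl_eq F S R k rfun d t _ (by omega)]
  · rw [gl_eq F S R k rfun d t (4*k-1) (by omega),
      gl_eq F S R k rfun d t (4*k-1+1) (by omega),
      gl_eq F S R k rfun d t (2*(4*k-1) + (t - 3*(4*k-1)) - 1) (by omega),
      gl_eq F S R k rfun d t (2*(4*k-1) + (t - 3*(4*k-1))) (by omega)]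

lemma pool_gl_eq (hk : 1 ≤ k) (t : ℕ) :
    poolOf F S k rfun d (gl F S R k rfun d t) t = poolOf F S k rfun d (gfun F S R k rfun d) t := by
  unfold poolOf
  split_ifs with h1 h2 h3
  · rfl
  · rfl
  · rw [gl_eq F S R k rfun d t (4*k-1 + pfn (4*k-1) (t - 2*(4*k-1)))
        (by have : pfn (4*k-1) (t - 2*(4*k-1)) ≤ t - 2*(4*k-1) := by
              unfold pfn; split_ifs <;> omega
            omega),
      gl_eq F S R k rfun d t (4*k-1 + qfn (4*k-1) (t - 2*(4*k-1)))
        (by have : qfn (4*k-1) (t - 2*(4*k-1)) ≤ t - 2*(4*k-1) + 1 := by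
              unfold qfn; split_ifs <;> omega
            omega)]
  · rw [gl_eq F S R k rfun d t (2*(4*k-1) + (t - 3*(4*k-1)) - 1) (by omega),
      gl_eq F S R k rfun d t (2*(4*k-1) + (t - 3*(4*k-1))) (by omega),
      wpad_gl_eq F S R k rfun d hk t (by omega)]

lemma gfun_spec (hk : 1 ≤ k) (t : ℕ) :
    gfun F S R k rfun d t =
      pick (poolOf F S k rfun d (gfun F S R k rfun d) t \
            usedOf R k (gfun F S R k rfun d) t) d := by
  conv_lhs => unfold gfun
  rw [pool_gl_eq F S R k rfun d hk t, used_gl_eq F S R k rfun d t]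

lemma pool1_eq (prev : ℕ → V) (t : ℕ) (ha : 4*k-1 ≤ t) (hb : t < 2*(4*k-1)) :
    poolOf F S k rfun d prev t = S.filter (fun s => F.Adj (rfun ((t - (4*k-1) + 1)/4)) s) := by
  unfold poolOf; rw [if_neg (by omega), if_pos hb]

lemma pool2_eq (prev : ℕ → V) (t : ℕ) (ha : 2*(4*k-1) ≤ t) (hb : t < 3*(4*k-1)) :
    poolOf F S k rfun d prev t =
      S.filter (fun s => F.Adj (prev (4*k-1 + pfn (4*k-1) (t - 2*(4*k-1)))) s ∧
                         F.Adj (prev (4*k-1 + qfn (4*k-1) (t - 2*(4*k-1)))) s) := by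
  unfold poolOf; rw [if_neg (by omega), if_neg (by omega), if_pos hb]

lemma pool3_eq (prev : ℕ → V) (t : ℕ) (ha : 3*(4*k-1) ≤ t) :
    poolOf F S k rfun d prev t =
      S.filter (fun s => F.Adj (prev (2*(4*k-1) + (t - 3*(4*k-1)) - 1)) s ∧
                         F.Adj (prev (2*(4*k-1) + (t - 3*(4*k-1)))) s ∧
                         F.Adj (wpad F S k d prev t) s) := by
  unfold poolOf; rw [if_neg (by omega), if_neg (by omega), if_neg (by omega)]

-- continued

lemma genuine1 (hk : 1 ≤ k) (i : ℕ) (h1 : i < 4*k-1) (h2 : i % 4 ≠ 2) :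
    genuine k (4*k-1 + i) := by unfold genuine; omega

lemma genuine2 (hk : 1 ≤ k) (i : ℕ) (h1 : i < 4*k-1) (h2 : i % 4 ≠ 0) :
    genuine k (2*(4*k-1) + i) := by unfold genuine; omega

lemma genuine3 (hk : 1 ≤ k) (i : ℕ) (h1 : i < 4*k-1) (h2 : i % 4 = 2) :
    genuine k (3*(4*k-1) + i) := by unfold genuine; omega

lemma pq_facts (i : ℕ) (hk : 1 ≤ k) (hi1 : i < 4*k-1) (hi2 : i % 4 ≠ 0) :
    pfn (4*k-1) i < qfn (4*k-1) i ∧ qfn (4*k-1) i < 4*k-1 ∧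
    pfn (4*k-1) i % 4 ≠ 2 ∧ qfn (4*k-1) i % 4 ≠ 2 ∧ qfn (4*k-1) i ≤ i+1 := by
  unfold pfn qfn; split_ifs <;> omega

lemma step1_NS (hk : 1 ≤ k) (hrf : ∀ j < k, rfun j ∈ R) (p : ℕ)
    (hp1 : p < 4*k-1) (hp2 : p % 4 ≠ 2)
    (hmem : gfun F S R k rfun d (4*k-1+p) ∈
      poolOf F S k rfun d (gfun F S R k rfun d) (4*k-1+p)) :
    gfun F S R k rfun d (4*k-1+p) ∈ S.filter (fun s => ∃ r ∈ R, F.Adj r s) := by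
  rw [pool1_eq F S k rfun d _ _ (by omega) (by omega)] at hmem
  rw [Finset.mem_filter] at hmem ⊢
  exact ⟨hmem.1, rfun ((4*k-1+p - (4*k-1) + 1)/4), hrf _ (by omega), hmem.2⟩

lemma step2_NNS (hk : 1 ≤ k) (i : ℕ) (hi1 : i < 4*k-1) (hi2 : i % 4 ≠ 0)
    (hmem : gfun F S R k rfun d (2*(4*k-1)+i) ∈
      poolOf F S k rfun d (gfun F S R k rfun d) (2*(4*k-1)+i))
    (hb : gfun F S R k rfun d (4*k-1 + pfn (4*k-1) i) ∈
      S.filter (fun s => ∃ r ∈ R, F.Adj r s)) :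
    gfun F S R k rfun d (2*(4*k-1)+i) ∈
      S.filter (fun s => ∃ r ∈ S.filter (fun t => ∃ r' ∈ R, F.Adj r' t), F.Adj r s) := by
  rw [pool2_eq F S k rfun d _ _ (by omega) (by omega)] at hmem
  have e : 2*(4*k-1) + i - 2*(4*k-1) = i := by omega
  rw [e] at hmem
  rw [Finset.mem_filter] at hmem ⊢
  exact ⟨hmem.1, gfun F S R k rfun d (4*k-1 + pfn (4*k-1) i), hb, hmem.2.1⟩

lemma nonempty_aux (hk : 1 ≤ k) (hSR : Disjoint S R) (t B : ℕ) (P : Finset V)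
    (hPS : P ⊆ S) (hB : B ≤ P.card) (hcnt : cntF k t < B) :
    (P \ usedOf R k (gfun F S R k rfun d) t).Nonempty := by
  by_contra hne
  rw [Finset.not_nonempty_iff_eq_empty, Finset.sdiff_eq_empty_iff_subset] at hne
  have hsub : P ⊆ ((Finset.range t).filter (genuine k)).image (gfun F S R k rfun d) := by
    intro x hx
    have hxU := hne hx
    unfold usedOf at hxU
    rcases Finset.mem_union.mp hxU with h | h
    · exact absurd h (Finset.disjoint_left.mp hSR (hPS hx))
    · exact h
  have hc1 := Finset.card_le_card hsub
  have hc2 := Finset.card_image_le (s := (Finset.range t).filter (genuine k))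
    (f := gfun F S R k rfun d)
  rw [cnt_eq k hk t] at hc2
  omega


lemma main_inv (hk : 1 ≤ k) (hSR : Disjoint S R)
    (hrf : ∀ j < k, rfun j ∈ R)
    (hyp1 : ∀ v ∈ R, 3*k ≤ (S.filter (fun s => F.Adj v s)).card)
    (hyp2 : ∀ u ∈ S.filter (fun s => ∃ r ∈ R, F.Adj r s),
            ∀ v ∈ S.filter (fun s => ∃ r ∈ R, F.Adj r s), u ≠ v →
            6*k ≤ (S.filter (fun s => F.Adj u s ∧ F.Adj v s)).card)
    (hyp3 : ∀ u ∈ S.filter (fun s => ∃ r ∈ S.filter (fun t => ∃ r2 ∈ R, F.Adj r2 t), F.Adj r s),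
            ∀ v ∈ S.filter (fun s => ∃ r ∈ S.filter (fun t => ∃ r2 ∈ R, F.Adj r2 t), F.Adj r s),
            ∀ w ∈ S.filter (fun s => ∃ r ∈ S.filter (fun t => ∃ r2 ∈ R, F.Adj r2 t), F.Adj r s),
            u ≠ v → u ≠ w → v ≠ w →
            7*k ≤ (S.filter (fun s => F.Adj u s ∧ F.Adj v s ∧ F.Adj w s)).card) :
    ∀ t, genuine k t →
      gfun F S R k rfun d t ∈ poolOf F S k rfun d (gfun F S R k rfun d) t ∧
      gfun F S R k rfun d t ∉ usedOf R k (gfun F S R k rfun d) t := by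
  intro t
  induction t using Nat.strong_induction_on with
  | _ t IH =>
  intro hgt
  have key : (poolOf F S k rfun d (gfun F S R k rfun d) t \
      usedOf R k (gfun F S R k rfun d) t).Nonempty := by
    have gne : ∀ t1 t2, t1 < t2 → t2 < t → genuine k t1 → genuine k t2 →
        gfun F S R k rfun d t1 ≠ gfun F S R k rfun d t2 := by
      intro t1 t2 h12 h2t hg1 hg2 he
      refine (IH t2 h2t hg2).2 ?_
      unfold usedOf
      exact Finset.mem_union_right _ (Finset.mem_image.mpr
        ⟨t1, Finset.mem_filter.mpr ⟨Finset.mem_range.mpr h12, hg1⟩, he⟩)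
    have s1 : ∀ p, p < 4*k-1 → p % 4 ≠ 2 → 4*k-1+p < t →
        gfun F S R k rfun d (4*k-1+p) ∈ S.filter (fun s => ∃ r ∈ R, F.Adj r s) := by
      intro p h1 h2 h3
      exact step1_NS F S R k rfun d hk hrf p h1 h2 (IH _ h3 (genuine1 k hk p h1 h2)).1
    have s2 : ∀ i, i < 4*k-1 → i % 4 ≠ 0 → 2*(4*k-1)+i < t →
        gfun F S R k rfun d (2*(4*k-1)+i) ∈
          S.filter (fun s => ∃ r ∈ S.filter (fun t0 => ∃ r2 ∈ R, F.Adj r2 t0), F.Adj r s) := by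
      intro i h1 h2 h3
      have hpq := pq_facts k i hk h1 h2
      exact step2_NNS F S R k rfun d hk i h1 h2 (IH _ h3 (genuine2 k hk i h1 h2)).1
        (s1 (pfn (4*k-1) i) (by omega) (by omega) (by omega))
    rcases hgt with ⟨ha, hb, hc⟩ | ⟨ha, hb, hc⟩ | ⟨ha, hb, hc⟩
    · -- block 1
      rw [pool1_eq F S k rfun d _ t ha hb]
      refine nonempty_aux F S R k rfun d hk hSR t (3*k) _ (Finset.filter_subset _ _)
        (hyp1 _ (hrf _ (by omega))) (by unfold cntF; split_ifs <;> omega)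
    · -- block 2
      have hpq := pq_facts k (t - 2*(4*k-1)) hk (by omega) hc
      obtain ⟨hlt, hqm, hp2, hq2, hqi⟩ := hpq
      have hu := s1 (pfn (4*k-1) (t - 2*(4*k-1))) (by omega) hp2 (by omega)
      have hv := s1 (qfn (4*k-1) (t - 2*(4*k-1))) (by omega) hq2 (by omega)
      have huv : gfun F S R k rfun d (4*k-1 + pfn (4*k-1) (t - 2*(4*k-1))) ≠
          gfun F S R k rfun d (4*k-1 + qfn (4*k-1) (t - 2*(4*k-1))) :=
        gne _ _ (by omega) (by omega) (genuine1 k hk _ (by omega) hp2)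
          (genuine1 k hk _ (by omega) hq2)
      rw [pool2_eq F S k rfun d _ t ha hb]
      exact nonempty_aux F S R k rfun d hk hSR t (6*k) _ (Finset.filter_subset _ _)
        (hyp2 _ hu _ hv huv) (by unfold cntF; split_ifs <;> omega)
    · -- block 3
      have hi2 : 2 ≤ t - 3*(4*k-1) := by omega
      have e1 : 2*(4*k-1) + (t - 3*(4*k-1)) - 1 = 2*(4*k-1) + (t - 3*(4*k-1) - 1) := by omega
      have hu := s2 (t - 3*(4*k-1) - 1) (by omega) (by omega) (by omega)
      have hv := s2 (t - 3*(4*k-1)) (by omega) (by omega) (by omega)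
      have huv : gfun F S R k rfun d (2*(4*k-1) + (t - 3*(4*k-1) - 1)) ≠
          gfun F S R k rfun d (2*(4*k-1) + (t - 3*(4*k-1))) :=
        gne _ _ (by omega) (by omega) (genuine2 k hk _ (by omega) (by omega))
          (genuine2 k hk _ (by omega) (by omega))
      rw [pool3_eq F S k rfun d _ t ha, e1]
      by_cases hw : (t - 3*(4*k-1)) + 1 < 4*k-1
      · have hwe : wpad F S k d (gfun F S R k rfun d) t =
            gfun F S R k rfun d (2*(4*k-1) + (t - 3*(4*k-1)) + 1) := by
          unfold wpad; rw [if_pos hw]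
        have e2 : 2*(4*k-1) + (t - 3*(4*k-1)) + 1 = 2*(4*k-1) + (t - 3*(4*k-1) + 1) := by omega
        rw [hwe, e2]
        have hww := s2 (t - 3*(4*k-1) + 1) (by omega) (by omega) (by omega)
        have huw : gfun F S R k rfun d (2*(4*k-1) + (t - 3*(4*k-1) - 1)) ≠
            gfun F S R k rfun d (2*(4*k-1) + (t - 3*(4*k-1) + 1)) :=
          gne _ _ (by omega) (by omega) (genuine2 k hk _ (by omega) (by omega))
            (genuine2 k hk _ (by omega) (by omega))
        have hvw : gfun F S R k rfun d (2*(4*k-1) + (t - 3*(4*k-1))) ≠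
            gfun F S R k rfun d (2*(4*k-1) + (t - 3*(4*k-1) + 1)) :=
          gne _ _ (by omega) (by omega) (genuine2 k hk _ (by omega) (by omega))
            (genuine2 k hk _ (by omega) (by omega))
        exact nonempty_aux F S R k rfun d hk hSR t (7*k) _ (Finset.filter_subset _ _)
          (hyp3 _ hu _ hv _ hww huv huw hvw) (by unfold cntF; split_ifs <;> omega)
      · have hwe : wpad F S k d (gfun F S R k rfun d) t =
            pick ((S.filter (fun s => F.Adj (gfun F S R k rfun d (4*k-1)) s ∧
              F.Adj (gfun F S R k rfun d (4*k-1+1)) s)) \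
              {gfun F S R k rfun d (2*(4*k-1) + (t - 3*(4*k-1)) - 1),
               gfun F S R k rfun d (2*(4*k-1) + (t - 3*(4*k-1)))}) d := by
          unfold wpad; rw [if_neg hw]
        have hb0 : gfun F S R k rfun d (4*k-1) ∈ S.filter (fun s => ∃ r ∈ R, F.Adj r s) := by
          have h0 := s1 0 (by omega) (by omega) (by omega)
          simpa using h0
        have hb1 : gfun F S R k rfun d (4*k-1+1) ∈ S.filter (fun s => ∃ r ∈ R, F.Adj r s) :=
          s1 1 (by omega) (by omega) (by omega)
        have hb01 : gfun F S R k rfun d (4*k-1) ≠ gfun F S R k rfun d (4*k-1+1) :=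
          gne _ _ (by omega) (by omega) (by unfold genuine; omega) (by unfold genuine; omega)
        have hT := hyp2 _ hb0 _ hb1 hb01
        have hTne : ((S.filter (fun s => F.Adj (gfun F S R k rfun d (4*k-1)) s ∧
              F.Adj (gfun F S R k rfun d (4*k-1+1)) s)) \
              {gfun F S R k rfun d (2*(4*k-1) + (t - 3*(4*k-1)) - 1),
               gfun F S R k rfun d (2*(4*k-1) + (t - 3*(4*k-1)))}).Nonempty := by
          have hle := Finset.le_card_sdiff
            ({gfun F S R k rfun d (2*(4*k-1) + (t - 3*(4*k-1)) - 1),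
              gfun F S R k rfun d (2*(4*k-1) + (t - 3*(4*k-1)))})
            (S.filter (fun s => F.Adj (gfun F S R k rfun d (4*k-1)) s ∧
              F.Adj (gfun F S R k rfun d (4*k-1+1)) s))
          have hc2 : ({gfun F S R k rfun d (2*(4*k-1) + (t - 3*(4*k-1)) - 1),
              gfun F S R k rfun d (2*(4*k-1) + (t - 3*(4*k-1)))} : Finset V).card ≤ 2 := by
            apply le_trans (Finset.card_insert_le _ _); simp
          apply Finset.card_pos.mp; omega
        have hwmem := pick_mem hTne (d := d)
        rw [← hwe] at hwmem
        rw [Finset.mem_sdiff, Finset.mem_filter] at hwmem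
        obtain ⟨⟨hwS, hwadj0, hwadj1⟩, hwnot⟩ := hwmem
        simp only [Finset.mem_insert, Finset.mem_singleton, not_or] at hwnot
        have hwNN : wpad F S k d (gfun F S R k rfun d) t ∈
            S.filter (fun s => ∃ r ∈ S.filter (fun t0 => ∃ r2 ∈ R, F.Adj r2 t0), F.Adj r s) :=
          Finset.mem_filter.mpr ⟨hwS, gfun F S R k rfun d (4*k-1), hb0, hwadj0⟩
        have huw : gfun F S R k rfun d (2*(4*k-1) + (t - 3*(4*k-1) - 1)) ≠
            wpad F S k d (gfun F S R k rfun d) t := by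
          rw [← e1]; exact fun h => hwnot.1 h.symm
        have hvw : gfun F S R k rfun d (2*(4*k-1) + (t - 3*(4*k-1))) ≠
            wpad F S k d (gfun F S R k rfun d) t := fun h => hwnot.2 h.symm
        exact nonempty_aux F S R k rfun d hk hSR t (7*k) _ (Finset.filter_subset _ _)
          (hyp3 _ hu _ hv _ hwNN huv huw hvw) (by unfold cntF; split_ifs <;> omega)
  rw [gfun_spec F S R k rfun d hk t]
  have h := pick_mem key (d := d)
  rw [Finset.mem_sdiff] at h
  exact h

end Helpers


/-- The Absorbing Lemma: if `V(F) = S ∪ R` with `R ≠ ∅`, every vertex of `R` has at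
least `3|R|` neighbours in `S`, any two distinct vertices of `N(R,S)` have at least
`6|R|` common neighbours in `S`, and any three distinct vertices of `N(N(R,S),S)` have
at least `7|R|` common neighbours in `S`, then `F` contains a ladder `L_{4|R|−1}`
spanning `R` together with exactly `7|R| − 2` further vertices, all from `S`. -/
theorem absorbing_lemma {V : Type} [Fintype V] [DecidableEq V]
    (F : SimpleGraph V) [DecidableRel F.Adj] (S R : Finset V)
    (hpart : S ∪ R = Finset.univ) (hdisj : Disjoint S R) (hR : R.Nonempty)
    (h1 : ∀ v ∈ R, 3 * R.card ≤ (S.filter (fun s => F.Adj v s)).card)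
    (h2 : ∀ u ∈ S.filter (fun s => ∃ r ∈ R, F.Adj r s),
          ∀ v ∈ S.filter (fun s => ∃ r ∈ R, F.Adj r s), u ≠ v →
          6 * R.card ≤ (S.filter (fun s => F.Adj u s ∧ F.Adj v s)).card)
    (h3 : ∀ u ∈ S.filter (fun s => ∃ r ∈ S.filter (fun t => ∃ r' ∈ R, F.Adj r' t), F.Adj r s),
          ∀ v ∈ S.filter (fun s => ∃ r ∈ S.filter (fun t => ∃ r' ∈ R, F.Adj r' t), F.Adj r s),
          ∀ w ∈ S.filter (fun s => ∃ r ∈ S.filter (fun t => ∃ r' ∈ R, F.Adj r' t), F.Adj r s),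
          u ≠ v → u ≠ w → v ≠ w →
          7 * R.card ≤ (S.filter (fun s => F.Adj u s ∧ F.Adj v s ∧ F.Adj w s)).card) :
    ∃ φ : Fin (4 * R.card - 1) ⊕ Fin (4 * R.card - 1) → V,
      IsLadderEmb F φ ∧
      (R : Set V) ⊆ Set.range φ ∧
      Set.range φ \ (R : Set V) ⊆ (S : Set V) := by
  classical
  have hk : 1 ≤ R.card := Finset.card_pos.mpr hR
  obtain ⟨d, hd⟩ := hR
  set rf : ℕ → V := (fun j => if h : j < R.card then ((R.equivFin.symm ⟨j, h⟩ : ↥R) : V) else d)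
    with hrf_def
  have hrf : ∀ j < R.card, rf j ∈ R := by
    intro j hj
    simp only [hrf_def, dif_pos hj]
    exact Finset.coe_mem _
  have hrfinj : ∀ j1, j1 < R.card → ∀ j2, j2 < R.card → rf j1 = rf j2 → j1 = j2 := by
    intro j1 hj1 j2 hj2 he
    simp only [hrf_def, dif_pos hj1, dif_pos hj2] at he
    have h5 := R.equivFin.symm.injective (Subtype.coe_injective he)
    exact Fin.mk.inj_iff.mp h5
  have hmain := main_inv F S R R.card rf d hk hdisj hrf h1 h2 h3
  have hRS : ∀ v, v ∈ S → v ∈ R → False := fun v hs hr => (Finset.disjoint_left.mp hdisj hs) hr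
  have gS : ∀ t, genuine R.card t → gfun F S R R.card rf d t ∈ S := by
    intro t hg
    have hp := (hmain t hg).1
    rcases hg with ⟨ha,hb,hc⟩|⟨ha,hb,hc⟩|⟨ha,hb,hc⟩
    · rw [pool1_eq F S R.card rf d _ t ha hb] at hp; exact (Finset.mem_filter.mp hp).1
    · rw [pool2_eq F S R.card rf d _ t ha hb] at hp; exact (Finset.mem_filter.mp hp).1
    · rw [pool3_eq F S R.card rf d _ t ha] at hp; exact (Finset.mem_filter.mp hp).1
  have gNE : ∀ t1 t2, genuine R.card t1 → genuine R.card t2 → t1 ≠ t2 →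
      gfun F S R R.card rf d t1 ≠ gfun F S R R.card rf d t2 := by
    have key : ∀ t1 t2, genuine R.card t1 → genuine R.card t2 → t1 < t2 →
        gfun F S R R.card rf d t1 ≠ gfun F S R R.card rf d t2 := by
      intro t1 t2 hg1 hg2 hlt he
      apply (hmain t2 hg2).2
      unfold usedOf
      exact Finset.mem_union_right _ (Finset.mem_image.mpr
        ⟨t1, Finset.mem_filter.mpr ⟨Finset.mem_range.mpr hlt, hg1⟩, he⟩)
    intro t1 t2 hg1 hg2 hne
    rcases Nat.lt_or_ge t1 t2 with h | h
    · exact key t1 t2 hg1 hg2 h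
    · exact (key t2 t1 hg2 hg1 (by omega)).symm
  have adjmain : ∀ i j : ℕ, i < 4*R.card-1 → j < 4*R.card-1 → (j = i ∨ i = j+1 ∨ j = i+1) →
      F.Adj (if i % 4 = 0 then rf (i/4) else gfun F S R R.card rf d (2*(4*R.card-1) + i))
            (if j % 4 = 2 then gfun F S R R.card rf d (3*(4*R.card-1) + j)
             else gfun F S R R.card rf d (4*R.card-1 + j)) := by
    intro i j hi hj hij
    by_cases h0 : i % 4 = 0
    · have hj2 : j % 4 ≠ 2 := by omega
      rw [if_pos h0, if_neg hj2]
      have hp := (hmain (4*R.card-1+j) (genuine1 R.card hk j hj hj2)).1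
      rw [pool1_eq F S R.card rf d _ _ (by omega) (by omega)] at hp
      have hadj := (Finset.mem_filter.mp hp).2
      have e : (4*R.card-1+j - (4*R.card-1) + 1)/4 = i/4 := by omega
      rw [e] at hadj
      exact hadj
    · rw [if_neg h0]
      have hpA := (hmain (2*(4*R.card-1)+i) (genuine2 R.card hk i hi h0)).1
      rw [pool2_eq F S R.card rf d _ _ (by omega) (by omega)] at hpA
      have eA : 2*(4*R.card-1)+i - 2*(4*R.card-1) = i := by omega
      rw [eA] at hpA
      obtain ⟨hAS, hA1, hA2⟩ := Finset.mem_filter.mp hpA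
      by_cases hj2 : j % 4 = 2
      · rw [if_pos hj2]
        have hpB := (hmain (3*(4*R.card-1)+j) (genuine3 R.card hk j hj hj2)).1
        rw [pool3_eq F S R.card rf d _ _ (by omega)] at hpB
        have eB : 3*(4*R.card-1)+j - 3*(4*R.card-1) = j := by omega
        rw [eB] at hpB
        obtain ⟨hBS, hB1, hB2, hB3⟩ := Finset.mem_filter.mp hpB
        rcases hij with h | h | h
        · subst h; exact hB2
        · have hwe : wpad F S R.card d (gfun F S R R.card rf d) (3*(4*R.card-1)+j) =
              gfun F S R R.card rf d (2*(4*R.card-1) + j + 1) := by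
            unfold wpad
            rw [if_pos (by omega)]
            congr 1
            omega
          have e5 : 2*(4*R.card-1) + i = 2*(4*R.card-1) + j + 1 := by omega
          rw [e5]
          rw [hwe] at hB3
          exact hB3
        · have e6 : 2*(4*R.card-1) + j - 1 = 2*(4*R.card-1) + i := by omega
          rw [e6] at hB1
          exact hB1
      · rw [if_neg hj2]
        have hpq : j = pfn (4*R.card-1) i ∨ j = qfn (4*R.card-1) i := by
          unfold pfn qfn; split_ifs <;> omega
        rcases hpq with h | h
        · rw [h]; exact hA1.symm
        · rw [h]; exact hA2.symm
  refine ⟨Sum.elim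
      (fun i => if (i:ℕ) % 4 = 0 then rf ((i:ℕ)/4)
                else gfun F S R R.card rf d (2*(4*R.card-1) + (i:ℕ)))
      (fun j => if (j:ℕ) % 4 = 2 then gfun F S R R.card rf d (3*(4*R.card-1) + (j:ℕ))
                else gfun F S R R.card rf d (4*R.card-1 + (j:ℕ))), ⟨?_, ?_⟩, ?_, ?_⟩
  · -- injectivity
    intro x y hxy
    rcases x with i | i <;> rcases y with j | j <;>
      simp only [Sum.elim_inl, Sum.elim_inr] at hxy <;>
      have hiL := i.isLt <;> have hjL := j.isLt
    · by_cases hi : (i:ℕ) % 4 = 0 <;> by_cases hj : (j:ℕ) % 4 = 0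
      · rw [if_pos hi, if_pos hj] at hxy
        have h5 := hrfinj _ (by omega) _ (by omega) hxy
        exact congrArg Sum.inl (Fin.ext (by omega))
      · rw [if_pos hi, if_neg hj] at hxy
        have h5 := gS _ (genuine2 R.card hk _ j.isLt hj)
        rw [← hxy] at h5
        exact (hRS _ h5 (hrf _ (by omega))).elim
      · rw [if_neg hi, if_pos hj] at hxy
        have h5 := gS _ (genuine2 R.card hk _ i.isLt hi)
        rw [hxy] at h5
        exact (hRS _ h5 (hrf _ (by omega))).elim
      · rw [if_neg hi, if_neg hj] at hxy
        by_cases hij : (i:ℕ) = (j:ℕ)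
        · exact congrArg Sum.inl (Fin.ext hij)
        · exact absurd hxy (gNE _ _ (genuine2 R.card hk _ i.isLt hi)
            (genuine2 R.card hk _ j.isLt hj) (by omega))
    · by_cases hi : (i:ℕ) % 4 = 0 <;> by_cases hj : (j:ℕ) % 4 = 2
      · rw [if_pos hi, if_pos hj] at hxy
        have h5 := gS _ (genuine3 R.card hk _ j.isLt hj)
        rw [← hxy] at h5
        exact (hRS _ h5 (hrf _ (by omega))).elim
      · rw [if_pos hi, if_neg hj] at hxy
        have h5 := gS _ (genuine1 R.card hk _ j.isLt hj)
        rw [← hxy] at h5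
        exact (hRS _ h5 (hrf _ (by omega))).elim
      · rw [if_neg hi, if_pos hj] at hxy
        exact absurd hxy (gNE _ _ (genuine2 R.card hk _ i.isLt hi)
          (genuine3 R.card hk _ j.isLt hj) (by omega))
      · rw [if_neg hi, if_neg hj] at hxy
        exact absurd hxy (gNE _ _ (genuine2 R.card hk _ i.isLt hi)
          (genuine1 R.card hk _ j.isLt hj) (by omega))
    · by_cases hi : (i:ℕ) % 4 = 2 <;> by_cases hj : (j:ℕ) % 4 = 0
      · rw [if_pos hi, if_pos hj] at hxy
        have h5 := gS _ (genuine3 R.card hk _ i.isLt hi)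
        rw [hxy] at h5
        exact (hRS _ h5 (hrf _ (by omega))).elim
      · rw [if_pos hi, if_neg hj] at hxy
        exact absurd hxy (gNE _ _ (genuine3 R.card hk _ i.isLt hi)
          (genuine2 R.card hk _ j.isLt hj) (by omega))
      · rw [if_neg hi, if_pos hj] at hxy
        have h5 := gS _ (genuine1 R.card hk _ i.isLt hi)
        rw [hxy] at h5
        exact (hRS _ h5 (hrf _ (by omega))).elim
      · rw [if_neg hi, if_neg hj] at hxy
        exact absurd hxy (gNE _ _ (genuine1 R.card hk _ i.isLt hi)
          (genuine2 R.card hk _ j.isLt hj) (by omega))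
    · by_cases hi : (i:ℕ) % 4 = 2 <;> by_cases hj : (j:ℕ) % 4 = 2
      · rw [if_pos hi, if_pos hj] at hxy
        by_cases hij : (i:ℕ) = (j:ℕ)
        · exact congrArg Sum.inr (Fin.ext hij)
        · exact absurd hxy (gNE _ _ (genuine3 R.card hk _ i.isLt hi)
            (genuine3 R.card hk _ j.isLt hj) (by omega))
      · rw [if_pos hi, if_neg hj] at hxy
        exact absurd hxy (gNE _ _ (genuine3 R.card hk _ i.isLt hi)
          (genuine1 R.card hk _ j.isLt hj) (by omega))
      · rw [if_neg hi, if_pos hj] at hxy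
        exact absurd hxy (gNE _ _ (genuine1 R.card hk _ i.isLt hi)
          (genuine3 R.card hk _ j.isLt hj) (by omega))
      · rw [if_neg hi, if_neg hj] at hxy
        by_cases hij : (i:ℕ) = (j:ℕ)
        · exact congrArg Sum.inr (Fin.ext hij)
        · exact absurd hxy (gNE _ _ (genuine1 R.card hk _ i.isLt hi)
            (genuine1 R.card hk _ j.isLt hj) (by omega))
  · -- adjacency
    intro p q hadj
    rw [ladderGraph, SimpleGraph.fromRel_adj] at hadj
    obtain ⟨hne, hrel⟩ := hadj
    rcases p with i | i <;> rcases q with j | j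
    · rcases hrel with h | h
      · exact h.elim
      · exact h.elim
    · have h' : ((i:ℕ):ℤ) = ((j:ℕ):ℤ) ∨ ((i:ℕ):ℤ) = ((j:ℕ):ℤ)+1 ∨ ((j:ℕ):ℤ) = ((i:ℕ):ℤ)+1 := by
        rcases hrel with h | h
        · exact h
        · exact h.elim
      simp only [Sum.elim_inl, Sum.elim_inr]
      exact adjmain (i:ℕ) (j:ℕ) i.isLt j.isLt (by omega)
    · have h' : ((j:ℕ):ℤ) = ((i:ℕ):ℤ) ∨ ((j:ℕ):ℤ) = ((i:ℕ):ℤ)+1 ∨ ((i:ℕ):ℤ) = ((j:ℕ):ℤ)+1 := by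
        rcases hrel with h | h
        · exact h.elim
        · exact h
      simp only [Sum.elim_inl, Sum.elim_inr]
      exact (adjmain (j:ℕ) (i:ℕ) j.isLt i.isLt (by omega)).symm
    · rcases hrel with h | h
      · exact h.elim
      · exact h.elim
  · -- R ⊆ range
    intro v hv
    rw [Finset.mem_coe] at hv
    obtain ⟨jj, hjlt, hjv⟩ : ∃ j, j < R.card ∧ rf j = v := by
      refine ⟨(R.equivFin ⟨v, hv⟩ : ℕ), (R.equivFin ⟨v, hv⟩).isLt, ?_⟩
      simp only [hrf_def]
      rw [dif_pos (R.equivFin ⟨v, hv⟩).isLt]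
      simp
    refine ⟨Sum.inl ⟨4*jj, by omega⟩, ?_⟩
    simp only [Sum.elim_inl]
    show (if 4*jj % 4 = 0 then rf (4*jj/4)
          else gfun F S R R.card rf d (2*(4*R.card-1) + (4*jj))) = v
    rw [if_pos (by omega)]
    rw [show 4*jj/4 = jj by omega]
    exact hjv
  · -- range \ R ⊆ S
    rintro v ⟨⟨x, hx⟩, hvR⟩
    rcases x with i | i
    · simp only [Sum.elim_inl] at hx
      by_cases hi : (i:ℕ) % 4 = 0
      · rw [if_pos hi] at hx
        exact ((hvR (Finset.mem_coe.mpr (hx ▸ hrf _ (by have := i.isLt; omega)))).elim)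
      · rw [if_neg hi] at hx
        rw [← hx]
        exact Finset.mem_coe.mpr (gS _ (genuine2 R.card hk _ i.isLt hi))
    · simp only [Sum.elim_inr] at hx
      by_cases hi : (i:ℕ) % 4 = 2
      · rw [if_pos hi] at hx
        rw [← hx]
        exact Finset.mem_coe.mpr (gS _ (genuine3 R.card hk _ i.isLt hi))
      · rw [if_neg hi] at hx
        rw [← hx]
        exact Finset.mem_coe.mpr (gS _ (genuine1 R.card hk _ i.isLt hi))
end

section
/- Let 0 < β ≤ α/20 and α ≤ (1/17)³, and set α1 = α^{1/3} and α2 = α^{2/3}. Let G be a graph on n vertices with δ(G) ≥ (n+1)/2, and suppose V(G) = V1 ∪ V2 is a partition with |V1| ≥ (1/2 − 7β)n and Δ(G[V1]) ≤ βn (so that (1/2 − 7β)n ≤ |V1| ≤ (1/2 + β)n and (1/2 − β)n ≤ |V2| ≤ (1/2 + 7β)n). Define V2' = {v ∈ V2 : deg(v, V1) ≥ (1 − α1)|V1|}. Then |V2 − V2'| ≤ α2 |V2|. -/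
/-!
Count the edges between `V₁` and `V₂`. Every vertex of `V₁` has at least `(n+1)/2 - βn`
neighbours in `V₂`, while every vertex of `V₂ \ V₂'` misses more than `α₁|V₁|` vertices of `V₁`.
Comparing the two counts gives `α₁ |V₂ \ V₂'| ≤ |V₂| - (n+1)/2 + βn ≤ 8βn ≤ (2/5) α₁³ n`,
and `|V₂| ≥ (2/5) n` turns this into `|V₂ \ V₂'| ≤ α₁² |V₂| = α₂ |V₂|`.
-/

open Finset

namespace SimpleGraph

variable {V : Type*} [Fintype V] (G : SimpleGraph V) [DecidableRel G.Adj]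

theorem ncard_neighborSet (v : V) : (G.neighborSet v).ncard = G.degree v := by
  rw [Set.ncard_eq_toFinset_card', ← card_neighborFinset_eq_degree, neighborFinset]

variable [DecidableEq V]

theorem ncard_neighborSet_inter (v : V) (s : Set V) [Fintype s] :
    (G.neighborSet v ∩ s).ncard = #(G.neighborFinset v ∩ s.toFinset) := by
  rw [← Set.ncard_coe_finset]
  congr 1
  ext
  simp

/-- With `A = V₁`, `B = V₂` and `γ = α₁` this is the paper's `V₂ \ V₂'`. -/
noncomputable def nontypical (A B : Finset V) (γ : ℝ) : Finset V :=
  {w ∈ B | (#(G.neighborFinset w ∩ A) : ℝ) < (1 - γ) * #A}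

theorem sum_card_neighborFinset_inter_comm (s t : Finset V) :
    ∑ v ∈ s, #(G.neighborFinset v ∩ t) = ∑ w ∈ t, #(G.neighborFinset w ∩ s) := by
  simp_rw [card_eq_sum_ones]
  exact sum_comm' (by simp only [mem_inter, mem_neighborFinset]; tauto)

theorem card_neighborFinset_inter_add_card_inter_compl (v : V) (A : Finset V) :
    #(G.neighborFinset v ∩ A) + #(G.neighborFinset v ∩ Aᶜ) = G.degree v := by
  rw [← sdiff_eq_inter_compl, add_comm, card_sdiff_add_card_inter, card_neighborFinset_eq_degree]

theorem sum_card_neighborFinset_inter_le (A B : Finset V) (γ : ℝ) :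
    ∑ w ∈ B, (#(G.neighborFinset w ∩ A) : ℝ) ≤ #A * (#B - γ * #(G.nontypical A B γ)) := by
  have hpoint : ∀ w ∈ B, (#(G.neighborFinset w ∩ A) : ℝ) ≤
      #A - if w ∈ G.nontypical A B γ then γ * #A else 0 := by
    intro w hw
    split_ifs with hbad
    · have := (mem_filter.mp hbad).2
      linarith
    · rw [sub_zero]
      exact_mod_cast card_le_card inter_subset_right
  calc _ ≤ ∑ w ∈ B, ((#A : ℝ) - if w ∈ G.nontypical A B γ then γ * #A else 0) := sum_le_sum hpoint
    _ = _ := by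
      have hsub : G.nontypical A B γ ⊆ B := filter_subset _ B
      rw [sum_sub_distrib, sum_ite_mem, inter_eq_right.mpr hsub]
      simp only [sum_const, nsmul_eq_mul]
      ring

theorem coe_nontypical_toFinset (s : Set V) [Fintype s] (γ : ℝ) :
    ↑(G.nontypical s.toFinset s.toFinsetᶜ γ) =
      sᶜ \ {v | v ∈ sᶜ ∧ (1 - γ) * (s.ncard : ℝ) ≤ ((G.neighborSet v ∩ s).ncard : ℝ)} := by
  ext v
  simp only [nontypical, Set.mem_sdiff, Set.mem_ofPred_eq, coe_filter, Set.mem_compl_iff,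
    mem_compl, Set.mem_toFinset, ncard_neighborSet_inter, Set.ncard_eq_toFinset_card' s,
    not_and, not_le]
  tauto

theorem mul_card_nontypical_le {A : Finset V} (hA : A.Nonempty) {d Δ : ℝ} (γ : ℝ)
    (hδ : ∀ v, d ≤ G.degree v) (hΔ : ∀ v ∈ A, (#(G.neighborFinset v ∩ A) : ℝ) ≤ Δ) :
    γ * #(G.nontypical A Aᶜ γ) ≤ #Aᶜ + Δ - d := by
  have hlower : ∀ v ∈ A, d - Δ ≤ #(G.neighborFinset v ∩ Aᶜ) := by
    intro v hv
    have hsplit := congrArg (Nat.cast (R := ℝ)) (G.card_neighborFinset_inter_add_card_inter_compl v A)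
    push_cast at hsplit
    linarith [hδ v, hΔ v hv]
  have hcount : #A * (d - Δ) ≤ #A * (#Aᶜ - γ * #(G.nontypical A Aᶜ γ)) :=
    calc (#A : ℝ) * (d - Δ) = ∑ _v ∈ A, (d - Δ) := by rw [sum_const, nsmul_eq_mul]
      _ ≤ ∑ v ∈ A, (#(G.neighborFinset v ∩ Aᶜ) : ℝ) := sum_le_sum hlower
      _ = ∑ w ∈ Aᶜ, (#(G.neighborFinset w ∩ A) : ℝ) := by
        exact_mod_cast G.sum_card_neighborFinset_inter_comm A Aᶜ
      _ ≤ _ := G.sum_card_neighborFinset_inter_le A Aᶜ γ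
  have := le_of_mul_le_mul_left hcount (by exact_mod_cast hA.card_pos)
  linarith

end SimpleGraph

theorem le_sq_mul_of_mul_le {n a b x γ β : ℝ} (hn : 0 ≤ n) (hx : 0 ≤ x) (hγ0 : 0 < γ)
    (hγ1 : γ ≤ 1) (hβ : β ≤ γ ^ 3 / 20) (hab : a + b = n) (ha : (1 / 2 - 7 * β) * n ≤ a)
    (hxb : γ * x ≤ b + β * n - (n + 1) / 2) : x ≤ γ ^ 2 * b := by
  have hβ1 : β ≤ 1 / 20 := by linarith [pow_le_one₀ (n := 3) hγ0.le hγ1]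
  have hb : 2 / 5 * n ≤ b := by nlinarith [mul_nonneg hγ0.le hx]
  have hγx : γ * x ≤ γ * (2 / 5 * γ ^ 2 * n) := by nlinarith
  calc x ≤ 2 / 5 * γ ^ 2 * n := le_of_mul_le_mul_left hγx hγ0
    _ ≤ γ ^ 2 * b := by nlinarith [sq_nonneg γ]

/-- With `0 < β ≤ α/20`, `α ≤ (1/17)³`, `α₁ = α^{1/3}`, `α₂ = α^{2/3}`: if `G` is a
graph on `n` vertices with `δ(G) ≥ (n+1)/2` and `V(G) = V₁ ∪ V₂` is a partition with
`|V₁| ≥ (1/2 − 7β)n` and `Δ(G[V₁]) ≤ βn`, and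
`V₂' = {v ∈ V₂ : deg(v,V₁) ≥ (1 − α₁)|V₁|}`, then `|V₂ − V₂'| ≤ α₂|V₂|`. -/
theorem size_of_vertices_nontypical_to_V1
    (α β : ℝ) (hβ0 : 0 < β) (hβα : β ≤ α / 20) (hα : α ≤ (1 / 17) ^ 3)
    {V : Type} [Fintype V] (G : SimpleGraph V)
    (hδ : ∀ v : V, ((Fintype.card V : ℝ) + 1) / 2 ≤ ((G.neighborSet v).ncard : ℝ))
    (V1 V2 : Set V) (hunion : V1 ∪ V2 = Set.univ) (hdisj : Disjoint V1 V2)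
    (hV1 : (1 / 2 - 7 * β) * (Fintype.card V : ℝ) ≤ (V1.ncard : ℝ))
    (hΔ : ∀ v ∈ V1, ((G.neighborSet v ∩ V1).ncard : ℝ) ≤ β * (Fintype.card V : ℝ)) :
    (((V2 \ {v | v ∈ V2 ∧
        (1 - α ^ ((1 : ℝ) / 3)) * (V1.ncard : ℝ) ≤ ((G.neighborSet v ∩ V1).ncard : ℝ)}).ncard : ℝ))
      ≤ α ^ ((2 : ℝ) / 3) * (V2.ncard : ℝ) := by
  classical
  obtain rfl : V2 = V1ᶜ := (IsCompl.compl_eq ⟨hdisj, codisjoint_iff.mpr hunion⟩).symm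
  have hα0 : 0 < α := by linarith
  have hγ3 : (α ^ ((1 : ℝ) / 3)) ^ 3 = α := by
    rw [one_div]; exact_mod_cast Real.rpow_inv_natCast_pow hα0.le three_ne_zero
  have hα2 : α ^ ((2 : ℝ) / 3) = (α ^ ((1 : ℝ) / 3)) ^ 2 := by
    rw [← Real.rpow_natCast, ← Real.rpow_mul hα0.le]; norm_num
  set γ := α ^ ((1 : ℝ) / 3)
  have hγ0 : 0 < γ := Real.rpow_pos_of_pos hα0 _
  have hγ1 : γ ≤ 1 := (pow_le_one_iff_of_nonneg hγ0.le three_ne_zero).mp (by rw [hγ3]; linarith)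
  rw [← G.coe_nontypical_toFinset, Set.ncard_coe_finset, hα2, Set.ncard_eq_toFinset_card',
    Set.toFinset_compl]
  rw [Set.ncard_eq_toFinset_card'] at hV1
  rcases V1.toFinset.eq_empty_or_nonempty with hA | hA
  · simp only [SimpleGraph.nontypical, hA, inter_empty, card_empty, CharP.cast_eq_zero, mul_zero,
      lt_self_iff_false, filter_false]
    positivity
  · refine le_sq_mul_of_mul_le (β := β) (a := #V1.toFinset) (Nat.cast_nonneg _) (Nat.cast_nonneg _)
      hγ0 hγ1 (by linarith) (by exact_mod_cast card_add_card_compl _) hV1 ?_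
    refine G.mul_card_nontypical_le hA γ (fun v => by simpa [G.ncard_neighborSet] using hδ v)
      fun v hv => ?_
    simpa [G.ncard_neighborSet_inter] using hΔ v (Set.mem_toFinset.mp hv)
end

section
/- Let 0 < β ≤ 1/(20·17³) and let n be sufficiently large. Let G be a graph on n vertices with δ(G) ≥ (n+1)/2 which is not in Extremal Case 2, i.e., there is no partition V(G) = V1 ∪ V2 with |V1| ≥ (1/2 − 7β)n and Δ(G[V1]) ≤ βn. Then G contains a subgraph isomorphic to T1 if n is even, and a subgraph isomorphic to T2 if n is odd. -/
open SimpleGraph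

/-- For `0 < β ≤ 1/(20·17³)` and sufficiently large `n`: every graph `G` on `n`
vertices with `δ(G) ≥ (n+1)/2` which is not in Extremal Case 2 contains a copy of `T₁`
(two triangles `xab`, `ycd` joined by the edge `xy`) if `n` is even, and a copy of `T₂`
(vertex set `{x,y,z,a,b,c,d}`, edges `ab, cd, za, zb, xz, xb, yc, yd, xy`) if `n` is
odd. -/
theorem finds_T1_or_T2 (β : ℝ) (hβ0 : 0 < β) (hβ : β ≤ 1 / (20 * 17 ^ 3)) :
    ∃ n0 : ℕ, ∀ (V : Type) [Fintype V] (G : SimpleGraph V),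
      n0 ≤ Fintype.card V →
      (∀ v : V, ((Fintype.card V : ℝ) + 1) / 2 ≤ ((G.neighborSet v).ncard : ℝ)) →
      (¬ ∃ V1 V2 : Set V, V1 ∪ V2 = Set.univ ∧ Disjoint V1 V2 ∧
        (1 / 2 - 7 * β) * (Fintype.card V : ℝ) ≤ (V1.ncard : ℝ) ∧
        ∀ v ∈ V1, ((G.neighborSet v ∩ V1).ncard : ℝ) ≤ β * (Fintype.card V : ℝ)) →
      (Even (Fintype.card V) →
        ∃ x y a b c d : V, List.Pairwise (· ≠ ·) [x, y, a, b, c, d] ∧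
          G.Adj x y ∧ G.Adj x a ∧ G.Adj x b ∧ G.Adj a b ∧
          G.Adj y c ∧ G.Adj y d ∧ G.Adj c d) ∧
      (Odd (Fintype.card V) →
        ∃ x y z a b c d : V, List.Pairwise (· ≠ ·) [x, y, z, a, b, c, d] ∧
          G.Adj a b ∧ G.Adj c d ∧ G.Adj z a ∧ G.Adj z b ∧
          G.Adj x z ∧ G.Adj x b ∧ G.Adj y c ∧ G.Adj y d ∧ G.Adj x y) := by
  refine ⟨max 9 ⌈(4:ℝ)/β⌉₊, ?_⟩
  intro V _ G hn hdeg hne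
  set n : ℕ := Fintype.card V with hn_def
  have hn9 : (9:ℕ) ≤ n := le_trans (le_max_left _ _) hn
  have hnR : (0:ℝ) ≤ (n:ℝ) := Nat.cast_nonneg n
  have hβn : (4:ℝ) ≤ β * n := by
    have h1 : ((⌈(4:ℝ)/β⌉₊ : ℕ) : ℝ) ≤ (n:ℝ) := by
      exact_mod_cast le_trans (le_max_right (9:ℕ) _) hn
    have h2 : (4:ℝ)/β ≤ ⌈(4:ℝ)/β⌉₊ := Nat.le_ceil _
    have h3 : (4:ℝ)/β ≤ (n:ℝ) := le_trans h2 h1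
    calc (4:ℝ) = (4/β) * β := by field_simp
    _ ≤ (n:ℝ) * β := by nlinarith
    _ = β * n := mul_comm _ _
  -- key consequence of non-extremality
  have key : ∀ S : Set V, ((1:ℝ)/2 - 7*β) * (n:ℝ) ≤ (S.ncard : ℝ) →
      ∃ v ∈ S, β * (n:ℝ) < ((G.neighborSet v ∩ S).ncard : ℝ) := by
    intro S hS
    by_contra h
    push_neg at h
    exact hne ⟨S, Sᶜ, Set.union_compl_self S, disjoint_compl_right, hS, h⟩
  -- a set of size ≥ (1/2-7β)n is obtained from any neighborhood minus ≤ 4 vertices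
  have hdiff : ∀ (v : V) (t : Set V), (t.ncard : ℝ) ≤ 4 →
      ((1:ℝ)/2 - 7*β) * (n:ℝ) ≤ (((G.neighborSet v) \ t).ncard : ℝ) := by
    intro v t ht
    have hsub : G.neighborSet v ⊆ (G.neighborSet v \ t) ∪ t := by
      intro w hw
      by_cases hwt : w ∈ t
      · exact Or.inr hwt
      · exact Or.inl ⟨hw, hwt⟩
    have h1 : (G.neighborSet v).ncard ≤ (G.neighborSet v \ t).ncard + t.ncard :=
      le_trans (Set.ncard_le_ncard hsub (Set.toFinite _)) (Set.ncard_union_le _ _)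
    have h1R : ((G.neighborSet v).ncard : ℝ) ≤ ((G.neighborSet v \ t).ncard : ℝ) + (t.ncard : ℝ) := by
      exact_mod_cast h1
    have hdv := hdeg v
    have : ((n:ℝ) + 1) / 2 ≤ ((G.neighborSet v).ncard : ℝ) := hdv
    nlinarith
  have hVpos : 0 < n := by omega
  have hVne : Nonempty V := Fintype.card_pos_iff.mp hVpos
  obtain ⟨b⟩ := hVne
  -- Step 1: find z ∈ N(b) with many common neighbors with b
  have hSb : ((1:ℝ)/2 - 7*β) * (n:ℝ) ≤ ((G.neighborSet b).ncard : ℝ) := by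
    have := hdiff b ∅ (by simp)
    simpa using this
  obtain ⟨z, hzb, hzC⟩ := key _ hSb
  have hAdj_bz : G.Adj b z := hzb
  -- C = common neighbors of z and b, |C| > βn ≥ 4, pick x ≠ a in C
  set C : Set V := G.neighborSet z ∩ G.neighborSet b with hC_def
  have hC2 : 1 < C.ncard := by
    have : (4:ℝ) < (C.ncard : ℝ) := lt_of_le_of_lt hβn hzC
    exact_mod_cast lt_of_le_of_lt (by norm_num : (1:ℝ) ≤ 4) this
  obtain ⟨x, a, hxC, haC, hxa⟩ := (Set.one_lt_ncard_iff (Set.toFinite C)).mp hC2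
  have hAdj_zx : G.Adj z x := hxC.1
  have hAdj_bx : G.Adj b x := hxC.2
  have hAdj_za : G.Adj z a := haC.1
  have hAdj_ba : G.Adj b a := haC.2
  -- Step 2: pick y ∈ N(x) \ {z,a,b}
  have hSx : ((1:ℝ)/2 - 7*β) * (n:ℝ) ≤ (((G.neighborSet x) \ {z,a,b}).ncard : ℝ) := by
    refine hdiff x {z,a,b} ?_
    have h3 : ({z,a,b} : Set V).ncard ≤ 3 := by
      refine le_trans (Set.ncard_insert_le _ _) ?_
      have := Set.ncard_insert_le a ({b} : Set V)
      simp only [Set.ncard_singleton] at this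
      omega
    exact_mod_cast le_trans (Nat.cast_le.mpr h3) (by norm_num : (3:ℝ) ≤ 4)
  obtain ⟨y, hyS, -⟩ := key _ hSx
  have hAdj_xy : G.Adj x y := hyS.1
  have hy_ne : y ≠ z ∧ y ≠ a ∧ y ≠ b := by
    have := hyS.2
    simp only [Set.mem_insert_iff, Set.mem_singleton_iff] at this
    tauto
  -- Step 3: find c ∈ N(y) \ {x,z,a,b} with many neighbors in that set, pick d among them
  set S2 : Set V := (G.neighborSet y) \ {x,z,a,b} with hS2_def
  have hSy : ((1:ℝ)/2 - 7*β) * (n:ℝ) ≤ (S2.ncard : ℝ) := by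
    refine hdiff y {x,z,a,b} ?_
    have h4 : ({x,z,a,b} : Set V).ncard ≤ 4 := by
      refine le_trans (Set.ncard_insert_le _ _) ?_
      have h3 : ({z,a,b} : Set V).ncard ≤ 3 := by
        refine le_trans (Set.ncard_insert_le _ _) ?_
        have := Set.ncard_insert_le a ({b} : Set V)
        simp only [Set.ncard_singleton] at this
        omega
      omega
    exact_mod_cast Nat.cast_le.mpr h4
  obtain ⟨c, hcS, hcC⟩ := key _ hSy
  have hAdj_yc : G.Adj y c := hcS.1
  have hc_ne : c ≠ x ∧ c ≠ z ∧ c ≠ a ∧ c ≠ b := by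
    have := hcS.2
    simp only [Set.mem_insert_iff, Set.mem_singleton_iff] at this
    tauto
  have hD : (G.neighborSet c ∩ S2).Nonempty := by
    rw [← Set.ncard_pos (Set.toFinite _)]
    have : (0:ℝ) < ((G.neighborSet c ∩ S2).ncard : ℝ) := lt_of_le_of_lt (by nlinarith) hcC
    exact_mod_cast this
  obtain ⟨d, hdc, hdS⟩ := hD
  have hAdj_cd : G.Adj c d := hdc
  have hAdj_yd : G.Adj y d := hdS.1
  have hd_ne : d ≠ x ∧ d ≠ z ∧ d ≠ a ∧ d ≠ b := by
    have := hdS.2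
    simp only [Set.mem_insert_iff, Set.mem_singleton_iff] at this
    tauto
  -- distinctness facts
  have nxy : x ≠ y := hAdj_xy.ne
  have nxz : x ≠ z := hAdj_zx.ne'
  have nxa : x ≠ a := hxa
  have nxb : x ≠ b := hAdj_bx.ne'
  have nxc : x ≠ c := hc_ne.1.symm
  have nxd : x ≠ d := hd_ne.1.symm
  have nyz : y ≠ z := hy_ne.1
  have nya : y ≠ a := hy_ne.2.1
  have nyb : y ≠ b := hy_ne.2.2
  have nyc : y ≠ c := hAdj_yc.ne
  have nyd : y ≠ d := hAdj_yd.ne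
  have nza : z ≠ a := hAdj_za.ne
  have nzb : z ≠ b := hAdj_bz.ne'
  have nzc : z ≠ c := hc_ne.2.1.symm
  have nzd : z ≠ d := hd_ne.2.1.symm
  have nab : a ≠ b := hAdj_ba.ne'
  have nac : a ≠ c := hc_ne.2.2.1.symm
  have nad : a ≠ d := hd_ne.2.2.1.symm
  have nbc : b ≠ c := hc_ne.2.2.2.symm
  have nbd : b ≠ d := hd_ne.2.2.2.symm
  have ncd : c ≠ d := hAdj_cd.ne
  constructor
  · intro _
    -- T1: use x, y, z, b, c, d  (triangle x z b, triangle y c d, edge xy)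
    refine ⟨x, y, z, b, c, d, ?_, hAdj_xy, hAdj_zx.symm, hAdj_bx.symm, hAdj_bz.symm,
      hAdj_yc, hAdj_yd, hAdj_cd⟩
    refine List.Pairwise.cons ?_ (List.Pairwise.cons ?_ (List.Pairwise.cons ?_
      (List.Pairwise.cons ?_ (List.Pairwise.cons ?_ (List.Pairwise.cons ?_
      List.Pairwise.nil)))))
    · rintro w hw
      simp only [List.mem_cons, List.not_mem_nil, or_false] at hw
      rcases hw with rfl | rfl | rfl | rfl | rfl <;> assumption
    · rintro w hw
      simp only [List.mem_cons, List.not_mem_nil, or_false] at hw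
      rcases hw with rfl | rfl | rfl | rfl <;> assumption
    · rintro w hw
      simp only [List.mem_cons, List.not_mem_nil, or_false] at hw
      rcases hw with rfl | rfl | rfl <;> assumption
    · rintro w hw
      simp only [List.mem_cons, List.not_mem_nil, or_false] at hw
      rcases hw with rfl | rfl <;> assumption
    · rintro w hw
      simp only [List.mem_cons, List.not_mem_nil, or_false] at hw
      rcases hw with rfl <;> assumption
    · rintro w hw
      simp only [List.not_mem_nil] at hw
  · intro _
    -- T2: x y z a b c d
    refine ⟨x, y, z, a, b, c, d, ?_, hAdj_ba.symm, hAdj_cd, hAdj_za, hAdj_bz.symm,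
      hAdj_zx.symm, hAdj_bx.symm, hAdj_yc, hAdj_yd, hAdj_xy⟩
    refine List.Pairwise.cons ?_ (List.Pairwise.cons ?_ (List.Pairwise.cons ?_
      (List.Pairwise.cons ?_ (List.Pairwise.cons ?_ (List.Pairwise.cons ?_
      (List.Pairwise.cons ?_ List.Pairwise.nil))))))
    · rintro w hw
      simp only [List.mem_cons, List.not_mem_nil, or_false] at hw
      rcases hw with rfl | rfl | rfl | rfl | rfl | rfl <;> assumption
    · rintro w hw
      simp only [List.mem_cons, List.not_mem_nil, or_false] at hw
      rcases hw with rfl | rfl | rfl | rfl | rfl <;> assumption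
    · rintro w hw
      simp only [List.mem_cons, List.not_mem_nil, or_false] at hw
      rcases hw with rfl | rfl | rfl | rfl <;> assumption
    · rintro w hw
      simp only [List.mem_cons, List.not_mem_nil, or_false] at hw
      rcases hw with rfl | rfl | rfl <;> assumption
    · rintro w hw
      simp only [List.mem_cons, List.not_mem_nil, or_false] at hw
      rcases hw with rfl | rfl <;> assumption
    · rintro w hw
      simp only [List.mem_cons, List.not_mem_nil, or_false] at hw
      rcases hw with rfl <;> assumption
    · rintro w hw
      simp only [List.not_mem_nil] at hw
end
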